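/- Let q̄ = (q_1, q_2, ...) be a sequence of probabilities with q_l < 1 for all l > 0. Let δ > 0 and assume that for an unbounded set of n ∈ ℕ one has ∑_{l=1}^n q_l ≤ n^δ. For each n let E^n_δ be the event that no vertex x ∈ [n] has more than 8·n^{2δ} neighbors in M^n_{q̄}. Then limsup_{n→∞} Pr[E^n_δ holds in M^n_{q̄}] = 1. -/

import Mathlib

open FirstOrder Filter

/-- The simple graph on `Fin n` determined by a boolean function on unordered pairs. -/
def graphOf {n : ℕ} (f : Sym2 (Fin n) → Bool) : SimpleGraph (Fin n) where
  Adj i j := i ≠ j ∧ f s(i, j)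
  symm := by
    constructor
    intro i j h
    exact ⟨Ne.symm h.1, by rw [Sym2.eq_swap]; exact h.2⟩
  loopless := by constructor; intro i h; exact h.1 rfl

/-- The probability that the pair `e` is an edge, given edge probabilities `p`
indexed by the distance between the endpoints. -/
noncomputable def edgeProb (p : ℕ → ℝ) {n : ℕ} (e : Sym2 (Fin n)) : ℝ :=
  Sym2.lift ⟨fun i j => p (Nat.dist i.val j.val),
    fun i j => by simp only [Nat.dist_comm]⟩ e

/-- The probability weight of a particular configuration of edges. -/
noncomputable def weight (p : ℕ → ℝ) {n : ℕ} (f : Sym2 (Fin n) → Bool) : ℝ :=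
  ∏ e : Sym2 (Fin n),
    if e.IsDiag then (if f e then 0 else 1)
    else (if f e then edgeProb p e else 1 - edgeProb p e)

open Classical in
/-- The probability that the random graph `M^n_{p̄}` (on vertex set `Fin n`,
representing `[n] = {1,…,n}`, where distinct vertices at distance `d` are joined
independently with probability `p d`) satisfies the event `E`. -/
noncomputable def probEvent (p : ℕ → ℝ) (n : ℕ) (E : SimpleGraph (Fin n) → Prop) : ℝ :=
  ∑ f : Sym2 (Fin n) → Bool, if E (graphOf f) then weight p f else 0

/-- The probability that `M^n_{p̄}` satisfies the first-order sentence `ψ`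
in the language of graphs. -/
noncomputable def probSat (p : ℕ → ℝ) (n : ℕ) (ψ : Language.graph.Sentence) : ℝ :=
  probEvent p n (fun G => @Language.Sentence.Realize _ _ G.structure ψ)

/-- `M^n_{p̄}` satisfies the 0-1 law for first order logic. -/
def ZeroOneLaw (p : ℕ → ℝ) : Prop :=
  ∀ ψ : Language.graph.Sentence, ∃ c : ℝ, (c = 0 ∨ c = 1) ∧
    Tendsto (fun n => probSat p n ψ) atTop (nhds c)

/-- `M^n_{p̄}` satisfies the convergence law for first order logic. -/
def ConvergenceLaw (p : ℕ → ℝ) : Prop :=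
  ∀ ψ : Language.graph.Sentence, ∃ c : ℝ,
    Tendsto (fun n => probSat p n ψ) atTop (nhds c)

/-- `M^n_{p̄}` satisfies the weak convergence law for first order logic. -/
def WeakConvergenceLaw (p : ℕ → ℝ) : Prop :=
  ∀ ψ : Language.graph.Sentence,
    limsup (fun n => probSat p n ψ) atTop - liminf (fun n => probSat p n ψ) atTop < 1

/-- `q̄ ∈ Gen₁(p̄)`: `q̄` is obtained from `p̄` by inserting zeros (indices start at 1). -/
def Gen1 (p q : ℕ → ℝ) : Prop :=
  ∃ f : ℕ → ℕ, (∀ i j, 1 ≤ i → i < j → f i < f j) ∧ (∀ i, 1 ≤ i → 1 ≤ f i) ∧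
    (∀ i, 1 ≤ i → q (f i) = p i) ∧
    (∀ l, 1 ≤ l → (∀ i, 1 ≤ i → f i ≠ l) → q l = 0)

/-- `q̄ ∈ Gen₂(p̄)`: `q̄` is obtained from `p̄` by decreasing entries. -/
def Gen2 (p q : ℕ → ℝ) : Prop :=
  ∀ l, 1 ≤ l → q l ∈ Set.Icc (0 : ℝ) (p l)

/-- `q̄ ∈ Gen₃(p̄)`: `q̄` is obtained from `p̄` by replacing some entries with zero. -/
def Gen3 (p q : ℕ → ℝ) : Prop :=
  ∀ l, 1 ≤ l → q l = 0 ∨ q l = p l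

/-- The condition `lim_{n→∞} log(∏_{i=1}^n (1-p_i))/log n = 0`. -/
def StarCondition (p : ℕ → ℝ) : Prop :=
  Tendsto (fun n : ℕ => Real.log (∏ i ∈ Finset.Icc 1 n, (1 - p i)) / Real.log n)
    atTop (nhds 0)

/-!
Count, for each vertex `x`, the injective `k`-tuples of neighbours of `x`. Distinct neighbours
of `x` are joined to `x` by distinct edges, which are independent, so the expected count is at
most `(∑_y q_{|x-y|})^k ≤ (2 ∑_{l ≤ n} q_l)^k`; on the other hand a vertex of degree `d > t ≥ 2k`
has at least `(t/2)^k` such tuples. Markov's inequality and a union bound over `x` give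
`Pr[some degree exceeds t] ≤ n (4 ∑_{l ≤ n} q_l / t)^k`. For `t = 8 n^{2δ}` along the `n` with
`∑_{l ≤ n} q_l ≤ n^δ` this is at most `n^{1 - δk}`, which tends to `0` once `δk > 1`.
-/

open Finset Filter Function Topology

noncomputable def expectation (p : ℕ → ℝ) (n : ℕ) (X : (Sym2 (Fin n) → Bool) → ℝ) : ℝ :=
  ∑ f, weight p f * X f

/-- The probability under `weight p` that `f e = true`; loops are never present. -/
noncomputable def edgeMarginal (p : ℕ → ℝ) {n : ℕ} (e : Sym2 (Fin n)) : ℝ :=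
  if e.IsDiag then 0 else edgeProb p e

section RandomGraph

variable (p : ℕ → ℝ) {n : ℕ}

theorem expectation_prod_indicator (S : Finset (Sym2 (Fin n))) :
    expectation p n (fun f => ∏ e ∈ S, if f e then 1 else 0) = ∏ e ∈ S, edgeMarginal p e := by
  set w : Sym2 (Fin n) → Bool → ℝ := fun e b =>
    (if e.IsDiag then (if b then 0 else 1) else (if b then edgeProb p e else 1 - edgeProb p e)) *
      (if e ∈ S then (if b then 1 else 0) else 1)
  calc expectation p n (fun f => ∏ e ∈ S, if f e then 1 else 0)
      = ∑ f : Sym2 (Fin n) → Bool, ∏ e, w e (f e) := by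
        refine sum_congr rfl fun f _ => ?_
        rw [prod_mul_distrib, weight, prod_ite_mem, univ_inter]
    _ = ∏ e, ∑ b, w e b := (Fintype.prod_sum w).symm
    _ = ∏ e, if e ∈ S then edgeMarginal p e else 1 := by
        refine prod_congr rfl fun e _ => ?_
        by_cases he : e ∈ S <;> by_cases hd : e.IsDiag <;> simp [w, edgeMarginal, he, hd]
    _ = ∏ e ∈ S, edgeMarginal p e := by rw [prod_ite_mem, univ_inter]

theorem expectation_one : expectation p n (fun _ => 1) = 1 := by
  simpa using expectation_prod_indicator p (∅ : Finset (Sym2 (Fin n)))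

theorem expectation_sum {ι : Type*} (s : Finset ι) (X : ι → (Sym2 (Fin n) → Bool) → ℝ) :
    expectation p n (fun f => ∑ i ∈ s, X i f) = ∑ i ∈ s, expectation p n (X i) := by
  simp only [expectation, mul_sum]
  exact sum_comm

theorem one_le_dist_of_ne {i j : Fin n} (h : i ≠ j) : 1 ≤ Nat.dist i j :=
  Nat.dist_pos_of_ne (Fin.val_ne_of_ne h)

theorem edgeMarginal_mk (i j : Fin n) :
    edgeMarginal p s(i, j) = if i = j then 0 else p (Nat.dist i j) := by
  simp only [edgeMarginal, Sym2.mk_isDiag_iff]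
  rfl

theorem edgeMarginal_nonneg (hp : ∀ l, 1 ≤ l → 0 ≤ p l) (e : Sym2 (Fin n)) :
    0 ≤ edgeMarginal p e := by
  induction e using Sym2.ind with
  | _ i j =>
    rw [edgeMarginal_mk]
    split_ifs with h
    exacts [le_rfl, hp _ (one_le_dist_of_ne h)]

theorem weight_nonneg (hp : ∀ l, 1 ≤ l → 0 ≤ p l ∧ p l ≤ 1) (f : Sym2 (Fin n) → Bool) :
    0 ≤ weight p f := by
  refine prod_nonneg fun e _ => ?_
  induction e using Sym2.ind with
  | _ i j =>
    by_cases h : i = j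
    · simp only [Sym2.mk_isDiag_iff, h, if_true]
      split_ifs <;> norm_num
    · have hij := hp _ (one_le_dist_of_ne h)
      simp only [Sym2.mk_isDiag_iff, h, if_false]
      split_ifs <;> simp only [edgeProb, Sym2.lift_mk] <;> linarith

theorem expectation_mono (hp : ∀ l, 1 ≤ l → 0 ≤ p l ∧ p l ≤ 1)
    {X Y : (Sym2 (Fin n) → Bool) → ℝ} (h : ∀ f, X f ≤ Y f) :
    expectation p n X ≤ expectation p n Y :=
  sum_le_sum fun f _ => mul_le_mul_of_nonneg_left (h f) (weight_nonneg p hp f)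

theorem probEvent_nonneg (hp : ∀ l, 1 ≤ l → 0 ≤ p l ∧ p l ≤ 1)
    (E : SimpleGraph (Fin n) → Prop) : 0 ≤ probEvent p n E :=
  sum_nonneg fun f _ => by split_ifs; exacts [weight_nonneg p hp f, le_rfl]

theorem probEvent_le_one (hp : ∀ l, 1 ≤ l → 0 ≤ p l ∧ p l ≤ 1)
    (E : SimpleGraph (Fin n) → Prop) : probEvent p n E ≤ 1 := by
  rw [← expectation_one p, expectation]
  exact sum_le_sum fun f _ => by
    split_ifs
    exacts [(mul_one _).ge, by simpa using weight_nonneg p hp f]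

theorem one_sub_expectation_div_le_probEvent (hp : ∀ l, 1 ≤ l → 0 ≤ p l ∧ p l ≤ 1)
    (E : SimpleGraph (Fin n) → Prop) {X : (Sym2 (Fin n) → Bool) → ℝ} (hX : ∀ f, 0 ≤ X f)
    {m : ℝ} (hm : 0 < m) (hbad : ∀ f, ¬ E (graphOf f) → m ≤ X f) :
    1 - expectation p n X / m ≤ probEvent p n E := by
  classical
  have hcompl : 1 - probEvent p n E ≤ expectation p n X / m :=
    calc 1 - probEvent p n E = expectation p n (fun _ => 1) - probEvent p n E := by
          rw [expectation_one]
      _ = expectation p n (fun f => if E (graphOf f) then 0 else 1) := by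
          rw [probEvent, expectation, expectation, ← sum_sub_distrib]
          exact sum_congr rfl fun f _ => by split_ifs <;> ring
      _ ≤ expectation p n (fun f => X f / m) := expectation_mono p hp fun f => by
          split_ifs with h
          exacts [div_nonneg (hX f) hm.le, (one_le_div hm).2 (hbad f h)]
      _ = expectation p n X / m := by simp only [expectation, ← mul_div_assoc, sum_div]
  linarith

end RandomGraph

/-- Its mean is the `k`-th factorial moment of the degree of `x`. -/
def injNeighborTupleCount {V : Type*} [Fintype V] [DecidableEq V] (G : SimpleGraph V)
    [DecidableRel G.Adj] (x : V) (k : ℕ) : ℕ :=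
  #{g : Fin k → V | Injective g ∧ ∀ i, G.Adj x (g i)}

theorem injNeighborTupleCount_eq_descFactorial {V : Type*} [Fintype V] [DecidableEq V]
    (G : SimpleGraph V) [DecidableRel G.Adj] (x : V) (k : ℕ) :
    injNeighborTupleCount G x k = (G.neighborSet x).ncard.descFactorial k := by
  let e : {g : Fin k → V // Injective g ∧ ∀ i, G.Adj x (g i)} ≃ (Fin k ↪ G.neighborSet x) :=
    { toFun := fun g => ⟨fun i => ⟨g.1 i, g.2.2 i⟩, fun i j h => g.2.1 (congrArg Subtype.val h)⟩
      invFun := fun F =>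
        ⟨fun i => F i, fun i j h => F.injective (Subtype.ext h), fun i => (F i).2⟩
      left_inv := fun _ => rfl
      right_inv := fun _ => rfl }
  rw [injNeighborTupleCount, ← Fintype.card_subtype, Fintype.card_congr e,
    Fintype.card_embedding_eq, Fintype.card_fin, ← Nat.card_eq_fintype_card, Nat.card_coe_set_eq]

theorem div_two_pow_le_descFactorial {d k : ℕ} {t : ℝ} (hk : 2 * k ≤ t) (hd : t < d) :
    (t / 2) ^ k ≤ d.descFactorial k := by
  have hkd : k ≤ d + 1 := by exact_mod_cast (show (k : ℝ) ≤ d + 1 by linarith)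
  calc (t / 2) ^ k ≤ ((d + 1 - k : ℕ) : ℝ) ^ k := by
        gcongr
        · linarith
        · rw [Nat.cast_sub hkd]; push_cast; linarith
    _ ≤ d.descFactorial k := by exact_mod_cast Nat.pow_sub_le_descFactorial d k

section Degrees

variable (p : ℕ → ℝ) {n : ℕ}

instance (f : Sym2 (Fin n) → Bool) : DecidableRel (graphOf f).Adj :=
  fun i j => inferInstanceAs (Decidable (i ≠ j ∧ f s(i, j)))

theorem expectation_prod_adj (x : Fin n) {k : ℕ} {g : Fin k → Fin n} (hg : Injective g) :
    expectation p n (fun f => ∏ i, if (graphOf f).Adj x (g i) then 1 else 0) =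
      ∏ i, edgeMarginal p s(x, g i) := by
  by_cases hx : ∃ i, g i = x
  · obtain ⟨i, hi⟩ := hx
    rw [prod_eq_zero (mem_univ i) (by simp [edgeMarginal, hi])]
    simp [expectation, hi, prod_eq_zero (mem_univ i)]
  · simp only [not_exists] at hx
    have hinj : Set.InjOn (fun i => s(x, g i)) (univ : Finset (Fin k)) :=
      fun i _ j _ h => hg (Sym2.congr_right.1 h)
    calc _ = expectation p n
          (fun f => ∏ e ∈ univ.image (fun i => s(x, g i)), if f e then 1 else 0) := by
          refine congrArg _ (funext fun f => ?_)
          rw [prod_image hinj]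
          exact prod_congr rfl fun i _ => by simp [graphOf, Ne.symm (hx i)]
      _ = _ := by rw [expectation_prod_indicator, prod_image hinj]

theorem expectation_injNeighborTupleCount_le (hp : ∀ l, 1 ≤ l → 0 ≤ p l) (x : Fin n) (k : ℕ) :
    expectation p n (fun f => injNeighborTupleCount (graphOf f) x k)
      ≤ (∑ y, edgeMarginal p s(x, y)) ^ k := by
  have hcount : ∀ f, (injNeighborTupleCount (graphOf f) x k : ℝ) =
      ∑ g : Fin k → Fin n,
        if Injective g then ∏ i, (if (graphOf f).Adj x (g i) then 1 else 0) else 0 := by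
    intro f
    rw [injNeighborTupleCount, natCast_card_filter]
    exact sum_congr rfl fun g _ => by rw [Fintype.prod_boole, ite_and]; congr
  simp only [hcount]
  rw [expectation_sum, Fintype.sum_pow]
  refine sum_le_sum fun g _ => ?_
  by_cases hg : Injective g
  · simpa only [hg, if_true] using (expectation_prod_adj p x hg).le
  · simpa [hg, expectation] using prod_nonneg fun i _ => edgeMarginal_nonneg p hp _

theorem card_dist_eq_le_two (x : Fin n) (l : ℕ) : #{y : Fin n | Nat.dist x y = l} ≤ 2 :=
  calc #{y : Fin n | Nat.dist x y = l} ≤ #({(x : ℕ) + l, (x : ℕ) - l} : Finset ℕ) := by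
        refine card_le_card_of_injOn Fin.val (fun y hy => ?_) Fin.val_injective.injOn
        have hdist := (mem_filter.1 hy).2
        simp only [coe_insert, coe_singleton, Set.mem_insert_iff, Set.mem_singleton_iff]
        rw [Nat.dist] at hdist
        omega
    _ ≤ 2 := card_le_two

theorem sum_edgeMarginal_le (hp : ∀ l, 1 ≤ l → 0 ≤ p l) (x : Fin n) :
    ∑ y, edgeMarginal p s(x, y) ≤ 2 * ∑ l ∈ Icc 1 n, p l := by
  have hmaps : ∀ y ∈ univ.erase x, Nat.dist x y ∈ Icc 1 n := fun y hy => by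
    have := one_le_dist_of_ne (ne_of_mem_erase hy).symm
    have := x.isLt; have := y.isLt
    rw [mem_Icc, Nat.dist] at *
    omega
  calc ∑ y, edgeMarginal p s(x, y) = ∑ y ∈ univ.erase x, p (Nat.dist x y) := by
        rw [← sum_erase univ (a := x) (by simp [edgeMarginal])]
        exact sum_congr rfl fun y hy => by rw [edgeMarginal_mk, if_neg (ne_of_mem_erase hy).symm]
    _ = ∑ l ∈ Icc 1 n, #(filter (fun y : Fin n => Nat.dist x y = l) (univ.erase x)) • p l := by
        rw [← sum_fiberwise_of_maps_to' hmaps]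
        simp only [sum_const]
    _ ≤ ∑ l ∈ Icc 1 n, 2 * p l := sum_le_sum fun l hl => by
        rw [nsmul_eq_mul]
        gcongr
        · exact hp l (mem_Icc.1 hl).1
        · exact_mod_cast (card_le_card (filter_subset_filter _ (subset_univ _))).trans
            (card_dist_eq_le_two x l)
    _ = 2 * ∑ l ∈ Icc 1 n, p l := (mul_sum _ _ _).symm

theorem one_sub_le_probEvent_ncard_neighborSet_le (hp : ∀ l, 1 ≤ l → 0 ≤ p l ∧ p l ≤ 1)
    {k : ℕ} (hk : 0 < k) {t : ℝ} (ht : 2 * k ≤ t) :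
    1 - n * (4 * (∑ l ∈ Icc 1 n, p l) / t) ^ k
      ≤ probEvent p n (fun G => ∀ x, ((G.neighborSet x).ncard : ℝ) ≤ t) := by
  set S := ∑ l ∈ Icc 1 n, p l
  have hp0 : ∀ l, 1 ≤ l → 0 ≤ p l := fun l hl => (hp l hl).1
  have ht0 : 0 < t := lt_of_lt_of_le (by positivity) ht
  let X : (Sym2 (Fin n) → Bool) → ℝ := fun f => ∑ x, (injNeighborTupleCount (graphOf f) x k : ℝ)
  have hbad : ∀ f, ¬ (∀ x, (((graphOf f).neighborSet x).ncard : ℝ) ≤ t) → (t / 2) ^ k ≤ X f := by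
    intro f hf
    obtain ⟨x, hx⟩ := not_forall.1 hf
    calc (t / 2) ^ k ≤ ((graphOf f).neighborSet x).ncard.descFactorial k :=
          div_two_pow_le_descFactorial ht (not_le.1 hx)
      _ = injNeighborTupleCount (graphOf f) x k := by
          rw [injNeighborTupleCount_eq_descFactorial]
      _ ≤ X f := single_le_sum (f := fun x => (injNeighborTupleCount (graphOf f) x k : ℝ))
          (fun _ _ => by positivity) (mem_univ x)
  have hEX : expectation p n X ≤ n * (2 * S) ^ k :=
    calc expectation p n X
        = ∑ x, expectation p n (fun f => injNeighborTupleCount (graphOf f) x k) :=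
          expectation_sum p _ _
      _ ≤ ∑ _x : Fin n, (2 * S) ^ k := sum_le_sum fun x _ =>
          (expectation_injNeighborTupleCount_le p hp0 x k).trans <| pow_le_pow_left₀
            (sum_nonneg fun y _ => edgeMarginal_nonneg p hp0 _) (sum_edgeMarginal_le p hp0 x) k
      _ = n * (2 * S) ^ k := by simp
  calc 1 - n * (4 * S / t) ^ k = 1 - n * (2 * S) ^ k / (t / 2) ^ k := by
        rw [show 4 * S / t = 2 * S / (t / 2) by field_simp; ring, div_pow, mul_div_assoc]
    _ ≤ 1 - expectation p n X / (t / 2) ^ k := by gcongr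
    _ ≤ _ := one_sub_expectation_div_le_probEvent p hp _
        (fun f => sum_nonneg fun _ _ => by positivity) (by positivity) hbad

end Degrees

theorem natCast_mul_div_pow_le_rpow {n : ℕ} (hn : 1 ≤ n) {S δ : ℝ} (hS0 : 0 ≤ S)
    (hS : S ≤ (n : ℝ) ^ δ) (k : ℕ) :
    (n : ℝ) * (4 * S / (8 * (n : ℝ) ^ (2 * δ))) ^ k ≤ (n : ℝ) ^ (1 - δ * k) := by
  have hn0 : (0 : ℝ) < n := by exact_mod_cast hn
  set a := (n : ℝ) ^ δ with ha
  have ha0 : 0 < a := by positivity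
  have hratio : 4 * S / (8 * (n : ℝ) ^ (2 * δ)) ≤ a⁻¹ := by
    have hsq : (n : ℝ) ^ (2 * δ) = a ^ 2 := by
      rw [ha, ← Real.rpow_natCast, ← Real.rpow_mul hn0.le, mul_comm, Nat.cast_ofNat]
    rw [hsq, div_le_iff₀ (by positivity)]
    field_simp
    nlinarith
  calc (n : ℝ) * (4 * S / (8 * (n : ℝ) ^ (2 * δ))) ^ k ≤ n * (a⁻¹) ^ k := by gcongr
    _ = (n : ℝ) ^ (1 - δ * k) := by
        rw [ha, ← Real.rpow_neg hn0.le, ← Real.rpow_mul_natCast hn0.le, sub_eq_add_neg,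
          Real.rpow_add hn0, Real.rpow_one, neg_mul]

theorem le_limsup_of_frequently_sub_le {α : Type*} {l : Filter α} {F u : α → ℝ} {c : ℝ}
    (hF : IsBoundedUnder (· ≤ ·) l F) (hu : Tendsto u l (𝓝 0))
    (h : ∃ᶠ x in l, c - u x ≤ F x) : c ≤ limsup F l := by
  refine le_of_forall_pos_le_add fun ε hε => ?_
  have hfreq : ∃ᶠ x in l, c - ε ≤ F x :=
    (h.and_eventually (hu.eventually_lt_const hε)).mono fun x hx => by linarith [hx.1, hx.2]
  linarith [le_limsup_of_frequently_le hfreq hF]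

theorem statement_12 (q : ℕ → ℝ) (hq : ∀ l, 1 ≤ l → 0 ≤ q l ∧ q l < 1)
    (δ : ℝ) (hδ : 0 < δ)
    (hub : ∀ m : ℕ, ∃ n : ℕ, m ≤ n ∧ ∑ l ∈ Finset.Icc 1 n, q l ≤ (n : ℝ) ^ δ) :
    limsup (fun n => probEvent q n
      (fun G => ∀ x : Fin n,
        ((G.neighborSet x).ncard : ℝ) ≤ 8 * (n : ℝ) ^ (2 * δ))) atTop = 1 := by
  have hp : ∀ l, 1 ≤ l → 0 ≤ q l ∧ q l ≤ 1 := fun l hl => ⟨(hq l hl).1, (hq l hl).2.le⟩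
  obtain ⟨k, hkδ⟩ : ∃ k : ℕ, 1 < δ * k := by
    obtain ⟨k, hk⟩ := exists_nat_gt δ⁻¹
    exact ⟨k, by rwa [inv_lt_iff_one_lt_mul₀ hδ, mul_comm] at hk⟩
  have hk : 0 < k := Nat.pos_of_ne_zero fun h => by simp [h] at hkδ; linarith
  have hbdd : IsBoundedUnder (· ≤ ·) atTop (fun n => probEvent q n
      (fun G => ∀ x : Fin n, ((G.neighborSet x).ncard : ℝ) ≤ 8 * (n : ℝ) ^ (2 * δ))) :=
    isBoundedUnder_of ⟨1, fun n => probEvent_le_one q hp _⟩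
  apply le_antisymm
  · exact limsup_le_of_le (isBoundedUnder_of ⟨0, fun n => probEvent_nonneg q hp _⟩
      |>.isCoboundedUnder_le) (.of_forall fun n => probEvent_le_one q hp _)
  refine le_limsup_of_frequently_sub_le hbdd (u := fun n : ℕ => (n : ℝ) ^ (1 - δ * k)) ?_ ?_
  · simpa [Function.comp_def, neg_sub] using
      (tendsto_rpow_neg_atTop (by linarith : 0 < δ * k - 1)).comp tendsto_natCast_atTop_atTop
  have hlarge : ∀ᶠ n : ℕ in atTop, 1 ≤ n ∧ 2 * (k : ℝ) ≤ 8 * (n : ℝ) ^ (2 * δ) :=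
    (eventually_ge_atTop 1).and <| ((tendsto_rpow_atTop (by positivity)).comp
      tendsto_natCast_atTop_atTop).const_mul_atTop (by norm_num) |>.eventually_ge_atTop _
  refine ((frequently_atTop.2 hub).and_eventually hlarge).mono fun n ⟨hS, hn, ht⟩ => ?_
  have hS0 : 0 ≤ ∑ l ∈ Icc 1 n, q l := sum_nonneg fun l hl => (hq l (mem_Icc.1 hl).1).1
  linarith [one_sub_le_probEvent_ncard_neighborSet_le (n := n) q hp hk ht,
    natCast_mul_div_pow_le_rpow hn hS0 hS k]
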